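/- Let d(s) = exp(s·G_d) be a linear continuous dilation in ℝⁿ monotone with respect to a norm ‖·‖_{ℝⁿ}, and d̃(s) a linear continuous dilation in ℝ^k monotone with respect to a norm ‖·‖_{ℝ^k}, with canonical homogeneous norm ‖·‖_{d̃} on ℝ^k. Let f : ℝⁿ × ℝ^k → ℝⁿ be continuous with f(d(s)x, d̃(s)q) = e^{μs}·d(s)·f(x,q) for all s, x, q, μ > −1. Let φ_i (i = 1,…,p) be continuous on ℝⁿ, C¹ on ℝⁿ∖{0}, d-homogeneous of degree ν_i > 0; Ω = {x : φ_i(x) ≥ 0 for all i}. Assume solutions of ẋ = f(x, q(t)) are forward unique (at least locally) for every initial state x₀ ∉ int Ω and every essentially bounded q. If the system is Input-to-State Safe on Ω (there exist class-K functions γ̃_i with φ_i(x(t)) ≥ −γ̃_i(ess sup_{τ∈(t₀,t)}|q(τ)|) for all t ≥ t₀, x₀ ∈ Ω, essentially bounded q), then there exists r = (r₁,…,r_p) with r_i ≥ 0 such that φ_i(x(t)) + (r_i·‖q‖_{d̃,L∞(t₀,t)})^{ν_i} ≥ 0 for all t ≥ t₀, all x₀ ∈ Ω, all essentially bounded q,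 and all i, where ‖q‖_{d̃,L∞(t₀,t)} = ess sup_{τ∈(t₀,t)} ‖q(τ)‖_{d̃}. -/

import Mathlib

open Matrix Filter Topology Set

/-- The linear continuous group `d(s) = exp (s • G)` generated by `G`. -/
noncomputable def dilMat {n : ℕ} (G : Matrix (Fin n) (Fin n) ℝ) (s : ℝ) :
    Matrix (Fin n) (Fin n) ℝ := NormedSpace.exp (s • G)

/-- `N` is a norm on `ℝⁿ`. -/
def IsNorm {n : ℕ} (N : (Fin n → ℝ) → ℝ) : Prop :=
  (∀ x y : Fin n → ℝ, N (x + y) ≤ N x + N y) ∧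
  (∀ (c : ℝ) (x : Fin n → ℝ), N (c • x) = |c| * N x) ∧
  (∀ x : Fin n → ℝ, N x = 0 ↔ x = 0)

/-- `d(s) = exp (s G)` is a dilation with respect to `N`. -/
def IsDilation {n : ℕ} (G : Matrix (Fin n) (Fin n) ℝ) (N : (Fin n → ℝ) → ℝ) : Prop :=
  ∀ x : Fin n → ℝ, x ≠ 0 →
    Tendsto (fun s : ℝ => N (dilMat G s *ᵥ x)) atTop atTop ∧
    Tendsto (fun s : ℝ => N (dilMat G s *ᵥ x)) atBot (𝓝 0)

/-- The dilation is monotone with respect to `N`. -/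
def IsMonotoneDil {n : ℕ} (G : Matrix (Fin n) (Fin n) ℝ) (N : (Fin n → ℝ) → ℝ) : Prop :=
  ∀ x : Fin n → ℝ, x ≠ 0 → StrictMono fun s : ℝ => N (dilMat G s *ᵥ x)

/-- `hd` is the canonical homogeneous norm induced by `N`. -/
def IsCanonHomNorm {n : ℕ} (G : Matrix (Fin n) (Fin n) ℝ) (N : (Fin n → ℝ) → ℝ)
    (hd : (Fin n → ℝ) → ℝ) : Prop :=
  hd 0 = 0 ∧ ∀ x : Fin n → ℝ, x ≠ 0 →
    0 < hd x ∧ N (dilMat G (-Real.log (hd x)) *ᵥ x) = 1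

/-- A (essentially) bounded input. -/
def IsBddInput {k : ℕ} (q : ℝ → (Fin k → ℝ)) : Prop :=
  ∃ M : ℝ, ∀ t : ℝ, ‖q t‖ ≤ M

/-- The Euclidean norm `|x|`. -/
noncomputable def euclNorm {k : ℕ} (x : Fin k → ℝ) : ℝ :=
  Real.sqrt (∑ i, (x i) ^ 2)

/-- `sup_{τ ∈ (t₀,t)} |q(τ)|`. -/
noncomputable def supEuclOn {k : ℕ} (q : ℝ → (Fin k → ℝ)) (t₀ t : ℝ) : ℝ :=
  sSup ((fun τ => euclNorm (q τ)) '' Set.Ioo t₀ t)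

/-- `‖q‖_{d̃,L∞(t₀,t)} = sup_{τ ∈ (t₀,t)} ‖q(τ)‖_{d̃}` for a homogeneous norm `hdq`. -/
noncomputable def supHomOn {k : ℕ} (hdq : (Fin k → ℝ) → ℝ) (q : ℝ → (Fin k → ℝ))
    (t₀ t : ℝ) : ℝ :=
  sSup ((fun τ => hdq (q τ)) '' Set.Ioo t₀ t)

/-- A class `K` function. -/
def IsClassK (γ : ℝ → ℝ) : Prop :=
  ContinuousOn γ (Set.Ici 0) ∧ StrictMonoOn γ (Set.Ici 0) ∧ γ 0 = 0

/-!
The lower bound is obtained by rescaling. For a solution `x` driven by `q` with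
`S = ‖q‖_{d̃,L∞(t₀,t)}` and any `ρ > S`, put `s = -log ρ`; by homogeneity of `f`, the curve
`τ ↦ d(s) x(t₀ + e^{μ s}(τ - t₀))` is again a solution, driven by an input of homogeneous norm
at most `1`, and it starts in `Ω` because `Ω` is `d`-invariant. Homogeneous norm at most `1`
bounds the Euclidean norm by a constant `C`, so ISSf gives `φᵢ ≥ -γᵢ(C)` along the rescaled
curve, i.e. `φᵢ(x(t)) ≥ -ρ^{νᵢ} γᵢ(C)`. Letting `ρ ↓ S` gives the claim with `rᵢ = γᵢ(C)^{1/νᵢ}`.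
-/

theorem dilMat_zero {n : ℕ} (G : Matrix (Fin n) (Fin n) ℝ) : dilMat G 0 = 1 := by
  rw [dilMat, zero_smul, NormedSpace.exp_zero]

theorem dilMat_add {n : ℕ} (G : Matrix (Fin n) (Fin n) ℝ) (a b : ℝ) :
    dilMat G (a + b) = dilMat G a * dilMat G b := by
  rw [dilMat, add_smul]
  exact Matrix.exp_add_of_commute _ _ ((Commute.refl G).smul_left a |>.smul_right b)

theorem dilMat_mulVec_mulVec {n : ℕ} (G : Matrix (Fin n) (Fin n) ℝ) (a b : ℝ)
    (x : Fin n → ℝ) : dilMat G a *ᵥ (dilMat G b *ᵥ x) = dilMat G (a + b) *ᵥ x := by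
  rw [dilMat_add, mulVec_mulVec]

theorem dilMat_mulVec_ne_zero {n : ℕ} (G : Matrix (Fin n) (Fin n) ℝ) (s : ℝ)
    {x : Fin n → ℝ} (hx : x ≠ 0) : dilMat G s *ᵥ x ≠ 0 := by
  intro h
  have := congrArg (dilMat G (-s) *ᵥ ·) h
  simp only [dilMat_mulVec_mulVec, neg_add_cancel, dilMat_zero, one_mulVec, mulVec_zero] at this
  exact hx this

namespace IsNorm

variable {n : ℕ} {N : (Fin n → ℝ) → ℝ}

def toSeminorm (h : IsNorm N) : Seminorm ℝ (Fin n → ℝ) :=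
  Seminorm.of N h.1 fun c x => by rw [h.2.1, Real.norm_eq_abs]

theorem zero (h : IsNorm N) : N 0 = 0 :=
  (h.2.2 0).mpr rfl

theorem nonneg (h : IsNorm N) (x : Fin n → ℝ) : 0 ≤ N x :=
  apply_nonneg h.toSeminorm x

theorem pos (h : IsNorm N) {x : Fin n → ℝ} (hx : x ≠ 0) : 0 < N x :=
  (h.nonneg x).lt_of_ne fun e => hx ((h.2.2 x).mp e.symm)

theorem exists_le_mul_norm (h : IsNorm N) : ∃ K : ℝ, 0 ≤ K ∧ ∀ x, N x ≤ K * ‖x‖ := by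
  set e : Fin n → Fin n → ℝ := fun i => Pi.single i 1
  refine ⟨∑ i, N (e i), Finset.sum_nonneg fun i _ => h.nonneg _, fun x => ?_⟩
  have hx : x = ∑ i, x i • e i := by
    funext j
    simp [e, Finset.sum_apply, Pi.single_apply]
  calc N x = N (∑ i, x i • e i) := by rw [← hx]
    _ ≤ ∑ i, N (x i • e i) := Finset.le_sum_of_subadditive N h.zero.le h.1 _ _
    _ = ∑ i, |x i| * N (e i) := by simp_rw [h.2.1]
    _ ≤ ∑ i, ‖x‖ * N (e i) := by
        gcongr with i
        · exact h.nonneg _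
        · simpa using norm_le_pi_norm x i
    _ = (∑ i, N (e i)) * ‖x‖ := by rw [Finset.sum_mul]; simp_rw [mul_comm]

theorem continuous (h : IsNorm N) : Continuous N := by
  obtain ⟨K, hK0, hK⟩ := h.exists_le_mul_norm
  refine (LipschitzWith.of_dist_le_mul (K := K.toNNReal) fun x y => ?_).continuous
  rw [Real.dist_eq, dist_eq_norm, Real.coe_toNNReal K hK0]
  exact (abs_sub_map_le_sub h.toSeminorm x y).trans (hK _)

theorem exists_mul_norm_le (h : IsNorm N) : ∃ m : ℝ, 0 < m ∧ ∀ x, m * ‖x‖ ≤ N x := by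
  rcases isEmpty_or_nonempty (Fin n) with _ | _
  · exact ⟨1, one_pos, fun x => by simp [Subsingleton.elim x 0, h.zero]⟩
  obtain ⟨u, hu, hmin⟩ := (isCompact_sphere (0 : Fin n → ℝ) 1).exists_isMinOn
    (NormedSpace.sphere_nonempty.mpr zero_le_one) h.continuous.continuousOn
  have hu0 : u ≠ 0 := ne_zero_of_mem_unit_sphere ⟨u, hu⟩
  refine ⟨N u, h.pos hu0, fun x => ?_⟩
  rcases eq_or_ne x 0 with rfl | hx
  · simp [h.zero]
  have hxpos : 0 < ‖x‖ := norm_pos_iff.mpr hx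
  have hle : N u ≤ ‖x‖⁻¹ * N x := by
    have hmem : ‖x‖⁻¹ • x ∈ Metric.sphere (0 : Fin n → ℝ) 1 := by
      simp [norm_smul, hxpos.ne']
    simpa [h.2.1, abs_of_pos hxpos] using hmin hmem
  calc N u * ‖x‖ ≤ ‖x‖⁻¹ * N x * ‖x‖ := by gcongr
    _ = N x := by field_simp

theorem isCompact_setOf_eq_one (h : IsNorm N) : IsCompact {u | N u = 1} := by
  obtain ⟨m, hm, hmN⟩ := h.exists_mul_norm_le
  refine Metric.isCompact_of_isClosed_isBounded (isClosed_eq h.continuous continuous_const) ?_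
  refine isBounded_iff_forall_norm_le.mpr ⟨m⁻¹, fun u (hu : N u = 1) => ?_⟩
  rw [← one_div, le_div_iff₀ hm, mul_comm, ← hu]
  exact hmN u

end IsNorm

theorem IsMonotoneDil.monotone {n : ℕ} {G : Matrix (Fin n) (Fin n) ℝ}
    {N : (Fin n → ℝ) → ℝ} (hmono : IsMonotoneDil G N) (x : Fin n → ℝ) :
    Monotone fun s : ℝ => N (dilMat G s *ᵥ x) := by
  rcases eq_or_ne x 0 with rfl | hx
  · simp [monotone_const]
  · exact (hmono x hx).monotone

theorem IsDilation.exists_forall_lt {n : ℕ} {G : Matrix (Fin n) (Fin n) ℝ}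
    {N : (Fin n → ℝ) → ℝ} (hN : IsNorm N) (hdil : IsDilation G N)
    (hmono : IsMonotoneDil G N) (M : ℝ) :
    ∃ s : ℝ, ∀ u, N u = 1 → M < N (dilMat G s *ᵥ u) := by
  have hcover : {u | N u = 1} ⊆ ⋃ s : ℝ, {v | M < N (dilMat G s *ᵥ v)} := fun u (hu : N u = 1) =>
    mem_iUnion.mpr ((hdil u fun h0 => by simp [h0, hN.zero] at hu).1.eventually_gt_atTop M).exists
  refine hN.isCompact_setOf_eq_one.elim_directed_cover _ (fun s => ?_) hcover ?_
  · exact isOpen_lt continuous_const (hN.continuous.comp (continuous_const.matrix_mulVec continuous_id))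
  · exact Monotone.directed_le fun a b hab v hv => lt_of_lt_of_le hv (hmono.monotone v hab)

theorem euclNorm_le_sqrt_card_mul_norm {k : ℕ} (x : Fin k → ℝ) :
    euclNorm x ≤ Real.sqrt k * ‖x‖ := by
  rw [← Real.sqrt_sq (norm_nonneg x), ← Real.sqrt_mul (Nat.cast_nonneg k)]
  apply Real.sqrt_le_sqrt
  calc ∑ i, x i ^ 2 ≤ ∑ _i : Fin k, ‖x‖ ^ 2 := by
        refine Finset.sum_le_sum fun i _ => ?_
        rw [← sq_abs]
        exact pow_le_pow_left₀ (abs_nonneg _) (by simpa using norm_le_pi_norm x i) 2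
    _ = k * ‖x‖ ^ 2 := by simp

namespace IsCanonHomNorm

variable {n : ℕ} {G : Matrix (Fin n) (Fin n) ℝ} {N : (Fin n → ℝ) → ℝ}
  {hd : (Fin n → ℝ) → ℝ}

theorem nonneg (h : IsCanonHomNorm G N hd) (x : Fin n → ℝ) : 0 ≤ hd x := by
  rcases eq_or_ne x 0 with rfl | hx
  · exact h.1.ge
  · exact (h.2 x hx).1.le

theorem exists_unit_eq (h : IsCanonHomNorm G N hd) {x : Fin n → ℝ} (hx : x ≠ 0) :
    ∃ u, N u = 1 ∧ x = dilMat G (Real.log (hd x)) *ᵥ u :=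
  ⟨_, (h.2 x hx).2, by rw [dilMat_mulVec_mulVec, add_neg_cancel, dilMat_zero, one_mulVec]⟩

theorem dilMat_mulVec (hmono : IsMonotoneDil G N) (h : IsCanonHomNorm G N hd) (s : ℝ)
    (x : Fin n → ℝ) : hd (dilMat G s *ᵥ x) = Real.exp s * hd x := by
  rcases eq_or_ne x 0 with rfl | hx
  · simp [h.1]
  obtain ⟨hpos, hunit⟩ := h.2 x hx
  obtain ⟨hpos', hunit'⟩ := h.2 _ (dilMat_mulVec_ne_zero G s hx)
  rw [dilMat_mulVec_mulVec] at hunit'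
  -- both times normalise the orbit of `x` to the unit level, so they coincide
  have hlog := (hmono x hx).injective (hunit'.trans hunit.symm)
  rw [← Real.exp_log hpos', ← Real.exp_log hpos, ← Real.exp_add]
  congr 1
  linarith

theorem norm_le_one (hN : IsNorm N) (hmono : IsMonotoneDil G N) (h : IsCanonHomNorm G N hd)
    {x : Fin n → ℝ} (hx : hd x ≤ 1) : N x ≤ 1 := by
  rcases eq_or_ne x 0 with rfl | hx0
  · rw [hN.zero]; exact zero_le_one
  obtain ⟨u, hu, hxu⟩ := h.exists_unit_eq hx0
  rw [hxu]
  calc _ ≤ N (dilMat G 0 *ᵥ u) := hmono.monotone u (Real.log_nonpos (h.nonneg _) hx)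
    _ = 1 := by rw [dilMat_zero, one_mulVec, hu]

theorem exists_le_of_norm_le (hN : IsNorm N) (hdil : IsDilation G N)
    (hmono : IsMonotoneDil G N) (h : IsCanonHomNorm G N hd) (M : ℝ) :
    ∃ B : ℝ, ∀ x, N x ≤ M → hd x ≤ B := by
  obtain ⟨s, hs⟩ := hdil.exists_forall_lt hN hmono M
  refine ⟨Real.exp s, fun x hx => ?_⟩
  rcases eq_or_ne x 0 with rfl | hx0
  · rw [h.1]; exact (Real.exp_pos s).le
  obtain ⟨u, hu, hxu⟩ := h.exists_unit_eq hx0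
  by_contra! hlt
  have hlog : s ≤ Real.log (hd x) := (Real.lt_log_iff_exp_lt (h.2 x hx0).1).mpr hlt |>.le
  have : M < N (dilMat G (Real.log (hd x)) *ᵥ u) := (hs u hu).trans_le (hmono.monotone u hlog)
  rw [← hxu] at this
  linarith

theorem exists_euclNorm_le (hN : IsNorm N) (hmono : IsMonotoneDil G N)
    (h : IsCanonHomNorm G N hd) : ∃ C : ℝ, 0 ≤ C ∧ ∀ y, hd y ≤ 1 → euclNorm y ≤ C := by
  obtain ⟨m, hm, hmN⟩ := hN.exists_mul_norm_le
  refine ⟨Real.sqrt n / m, by positivity, fun y hy => ?_⟩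
  have hy' : ‖y‖ ≤ 1 / m := by
    rw [le_div_iff₀ hm, mul_comm]
    exact (hmN y).trans (h.norm_le_one hN hmono hy)
  calc euclNorm y ≤ Real.sqrt n * ‖y‖ := euclNorm_le_sqrt_card_mul_norm y
    _ ≤ Real.sqrt n * (1 / m) := by gcongr
    _ = Real.sqrt n / m := by ring

theorem supHomOn_nonneg (h : IsCanonHomNorm G N hd) (q : ℝ → Fin n → ℝ) (t₀ t : ℝ) :
    0 ≤ supHomOn hd q t₀ t :=
  Real.sSup_nonneg <| by rintro _ ⟨τ, -, rfl⟩; exact h.nonneg _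

end IsCanonHomNorm

theorem IsBddInput.mulVec_comp {k : ℕ} {q : ℝ → Fin k → ℝ} (hq : IsBddInput q)
    (B : Matrix (Fin k) (Fin k) ℝ) (σ : ℝ → ℝ) : IsBddInput fun τ => B *ᵥ q (σ τ) := by
  obtain ⟨M, hM⟩ := hq
  set L := LinearMap.toContinuousLinearMap (Matrix.mulVecLin B)
  exact ⟨‖L‖ * M, fun τ => (L.le_opNorm _).trans (by gcongr; exact hM _)⟩

theorem IsBddInput.exists_canonHomNorm_le {k : ℕ} {G : Matrix (Fin k) (Fin k) ℝ}
    {N : (Fin k → ℝ) → ℝ} {hd : (Fin k → ℝ) → ℝ} {q : ℝ → Fin k → ℝ} (hq : IsBddInput q)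
    (hN : IsNorm N) (hdil : IsDilation G N) (hmono : IsMonotoneDil G N)
    (h : IsCanonHomNorm G N hd) : ∃ B : ℝ, ∀ τ, hd (q τ) ≤ B := by
  obtain ⟨M, hM⟩ := hq
  obtain ⟨K, hK0, hK⟩ := hN.exists_le_mul_norm
  obtain ⟨B, hB⟩ := h.exists_le_of_norm_le hN hdil hmono (K * M)
  exact ⟨B, fun τ => hB _ ((hK _).trans (by gcongr; exact hM τ))⟩

theorem le_supHomOn {k : ℕ} {hd : (Fin k → ℝ) → ℝ} {q : ℝ → Fin k → ℝ} {B t₀ t τ : ℝ}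
    (hB : ∀ τ, hd (q τ) ≤ B) (hτ : τ ∈ Ioo t₀ t) : hd (q τ) ≤ supHomOn hd q t₀ t :=
  le_csSup ⟨B, by rintro _ ⟨τ, -, rfl⟩; exact hB τ⟩ (mem_image_of_mem _ hτ)

theorem supEuclOn_nonneg {k : ℕ} (q : ℝ → Fin k → ℝ) (t₀ t : ℝ) : 0 ≤ supEuclOn q t₀ t :=
  Real.sSup_nonneg <| by rintro _ ⟨τ, -, rfl⟩; exact Real.sqrt_nonneg _

theorem supEuclOn_le {k : ℕ} {q : ℝ → Fin k → ℝ} {t₀ t C : ℝ} (hC : 0 ≤ C)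
    (h : ∀ τ ∈ Ioo t₀ t, euclNorm (q τ) ≤ C) : supEuclOn q t₀ t ≤ C :=
  Real.sSup_le (by rintro _ ⟨τ, hτ, rfl⟩; exact h τ hτ) hC

def IsSolution {n k : ℕ} (f : (Fin n → ℝ) → (Fin k → ℝ) → (Fin n → ℝ))
    (q : ℝ → Fin k → ℝ) (t₀ : ℝ) (x : ℝ → Fin n → ℝ) : Prop :=
  ∀ t, t₀ ≤ t → HasDerivAt x (f (x t) (q t)) t

theorem IsSolution.rescale {n k : ℕ} {f : (Fin n → ℝ) → (Fin k → ℝ) → (Fin n → ℝ)}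
    {q : ℝ → Fin k → ℝ} {t₀ : ℝ} {x : ℝ → Fin n → ℝ} {A : Matrix (Fin n) (Fin n) ℝ}
    {B : Matrix (Fin k) (Fin k) ℝ} {c : ℝ} (hc : 0 ≤ c)
    (hf : ∀ y v, f (A *ᵥ y) (B *ᵥ v) = c • (A *ᵥ f y v)) (hx : IsSolution f q t₀ x) :
    IsSolution f (fun τ => B *ᵥ q (t₀ + c * (τ - t₀))) t₀
      (fun τ => A *ᵥ x (t₀ + c * (τ - t₀))) := by
  intro τ hτ
  have hσ : HasDerivAt (fun τ => t₀ + c * (τ - t₀)) c τ := by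
    simpa using (((hasDerivAt_id τ).sub_const t₀).const_mul c).const_add t₀
  have hxσ := (hx _ (by nlinarith)).scomp τ hσ
  have := (Matrix.mulVecLin A).toContinuousLinearMap.hasFDerivAt.comp_hasDerivAt τ hxσ
  refine this.congr_deriv ?_
  change A *ᵥ (c • _) = _
  rw [hf, Matrix.mulVec_smul]

def HasSafetyMargin {n k : ℕ} (f : (Fin n → ℝ) → (Fin k → ℝ) → (Fin n → ℝ))
    (Ω : Set (Fin n → ℝ)) (hd : (Fin k → ℝ) → ℝ) (φ : (Fin n → ℝ) → ℝ) (ρ β : ℝ) : Prop :=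
  ∀ q, IsBddInput q → ∀ t₀ x, IsSolution f q t₀ x → x t₀ ∈ Ω → ∀ t, t₀ ≤ t →
    (∀ τ ∈ Ioo t₀ t, hd (q τ) ≤ ρ) → -β ≤ φ (x t)

theorem HasSafetyMargin.rescale {n k : ℕ} {G : Matrix (Fin n) (Fin n) ℝ}
    {Gt : Matrix (Fin k) (Fin k) ℝ} {Nk : (Fin k → ℝ) → ℝ} {hd : (Fin k → ℝ) → ℝ}
    {f : (Fin n → ℝ) → (Fin k → ℝ) → (Fin n → ℝ)} {μ ν β ρ : ℝ} {Ω : Set (Fin n → ℝ)}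
    {φ : (Fin n → ℝ) → ℝ} (hmono : IsMonotoneDil Gt Nk) (hhd : IsCanonHomNorm Gt Nk hd)
    (hf : ∀ (s : ℝ) (x : Fin n → ℝ) (q : Fin k → ℝ),
      f (dilMat G s *ᵥ x) (dilMat Gt s *ᵥ q) = Real.exp (μ * s) • (dilMat G s *ᵥ f x q))
    (hφ : ∀ (s : ℝ) (x : Fin n → ℝ), φ (dilMat G s *ᵥ x) = Real.exp (ν * s) * φ x)
    (hΩ : ∀ (s : ℝ), ∀ x ∈ Ω, dilMat G s *ᵥ x ∈ Ω)
    (h : HasSafetyMargin f Ω hd φ 1 β) (hρ : 0 < ρ) :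
    HasSafetyMargin f Ω hd φ ρ (ρ ^ ν * β) := by
  intro q hq t₀ x hx hx₀ t ht hqρ
  set s := -Real.log ρ
  set c := Real.exp (μ * s)
  have hc : 0 < c := Real.exp_pos _
  set t' := t₀ + (t - t₀) / c with ht'_def
  have ht' : t₀ + c * (t' - t₀) = t := by rw [ht'_def]; field_simp; ring
  have hσ : ∀ τ ∈ Ioo t₀ t', t₀ + c * (τ - t₀) ∈ Ioo t₀ t := by
    rintro τ ⟨h₁, h₂⟩
    rw [← ht']
    constructor <;> nlinarith
  have hunit : ∀ τ ∈ Ioo t₀ t', hd (dilMat Gt s *ᵥ q (t₀ + c * (τ - t₀))) ≤ 1 := by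
    intro τ hτ
    rw [hhd.dilMat_mulVec hmono, Real.exp_neg, Real.exp_log hρ]
    exact (inv_mul_le_one₀ hρ).mpr (hqρ _ (hσ τ hτ))
  have key := h _ (hq.mulVec_comp _ _) t₀ _ (hx.rescale hc.le (hf s))
    (by simpa using hΩ s _ hx₀) t' (by rw [← sub_nonneg, ← mul_le_mul_iff_of_pos_left hc]; linarith) hunit
  simp only [ht', hφ] at key
  have hscale : ρ ^ ν * Real.exp (ν * s) = 1 := by
    rw [Real.rpow_def_of_pos hρ, ← Real.exp_add, ← Real.exp_zero]
    congr 1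
    ring
  calc -(ρ ^ ν * β) = ρ ^ ν * -β := by ring
    _ ≤ ρ ^ ν * (Real.exp (ν * s) * φ (x t)) := by gcongr
    _ = φ (x t) := by rw [← mul_assoc, hscale, one_mul]

theorem neg_rpow_mul_le_of_forall_gt {S ν β a : ℝ} (hν : 0 ≤ ν)
    (h : ∀ ρ > S, -(ρ ^ ν * β) ≤ a) : -(S ^ ν * β) ≤ a :=
  le_of_tendsto (((Real.continuousAt_rpow_const S ν (Or.inr hν)).tendsto.mul_const β).neg.mono_left
    (nhdsWithin_le_nhds (s := Ioi S))) (eventually_nhdsWithin_of_forall h)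

theorem stmt13_general {n k : ℕ} (p : ℕ)
    (G : Matrix (Fin n) (Fin n) ℝ) (Gt : Matrix (Fin k) (Fin k) ℝ)
    (Nk : (Fin k → ℝ) → ℝ)
    (hNk : IsNorm Nk)
    (hdilGt : IsDilation Gt Nk) (hmonoGt : IsMonotoneDil Gt Nk)
    (hdq : (Fin k → ℝ) → ℝ) (hhdq : IsCanonHomNorm Gt Nk hdq)
    (f : (Fin n → ℝ) → (Fin k → ℝ) → (Fin n → ℝ)) (μ : ℝ)
    (hfhom : ∀ (s : ℝ) (x : Fin n → ℝ) (q : Fin k → ℝ),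
      f (dilMat G s *ᵥ x) (dilMat Gt s *ᵥ q) = Real.exp (μ * s) • (dilMat G s *ᵥ f x q))
    (φ : Fin p → (Fin n → ℝ) → ℝ) (ν : Fin p → ℝ) (hν : ∀ i, 0 < ν i)
    (hφhom : ∀ i, ∀ (s : ℝ) (x : Fin n → ℝ),
      φ i (dilMat G s *ᵥ x) = Real.exp (ν i * s) * φ i x)
    (Ω : Set (Fin n → ℝ)) (hΩ : Ω = {x : Fin n → ℝ | ∀ i, 0 ≤ φ i x})
    -- the system is Input-to-State Safe on Ω
    (hISSf : ∃ γ : Fin p → ℝ → ℝ, (∀ i, IsClassK (γ i)) ∧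
      ∀ q : ℝ → (Fin k → ℝ), IsBddInput q → ∀ t₀ : ℝ, ∀ x : ℝ → (Fin n → ℝ),
        (∀ t : ℝ, t₀ ≤ t → HasDerivAt x (f (x t) (q t)) t) → x t₀ ∈ Ω →
        ∀ t : ℝ, t₀ ≤ t → ∀ i, -(γ i (supEuclOn q t₀ t)) ≤ φ i (x t)) :
    ∃ r : Fin p → ℝ, (∀ i, 0 ≤ r i) ∧
      ∀ q : ℝ → (Fin k → ℝ), IsBddInput q → ∀ t₀ : ℝ, ∀ x : ℝ → (Fin n → ℝ),
        (∀ t : ℝ, t₀ ≤ t → HasDerivAt x (f (x t) (q t)) t) → x t₀ ∈ Ω →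
        ∀ t : ℝ, t₀ ≤ t → ∀ i,
          0 ≤ φ i (x t) + (r i * supHomOn hdq q t₀ t) ^ ν i := by
  obtain ⟨γ, hγK, hγ⟩ := hISSf
  obtain ⟨C, hC0, hC⟩ := hhdq.exists_euclNorm_le hNk hmonoGt
  have hγC : ∀ i, 0 ≤ γ i C := fun i => (hγK i).2.2 ▸ (hγK i).2.1.monotoneOn self_mem_Ici hC0 hC0
  have hΩdil : ∀ s, ∀ x ∈ Ω, dilMat G s *ᵥ x ∈ Ω := by
    subst hΩ
    intro s x hx i
    rw [hφhom]
    exact mul_nonneg (Real.exp_pos _).le (hx i)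
  have hunit : ∀ i, HasSafetyMargin f Ω hdq (φ i) 1 (γ i C) :=
    fun i q hq t₀ x hx hx₀ t ht hq1 => (hγ q hq t₀ x hx hx₀ t ht i).trans'
      (neg_le_neg ((hγK i).2.1.monotoneOn (supEuclOn_nonneg q t₀ t) hC0
        (supEuclOn_le hC0 fun τ hτ => hC _ (hq1 τ hτ))))
  refine ⟨fun i => γ i C ^ (ν i)⁻¹, fun i => Real.rpow_nonneg (hγC i) _, ?_⟩
  intro q hq t₀ x hx hx₀ t ht i
  obtain ⟨B, hB⟩ := hq.exists_canonHomNorm_le hNk hdilGt hmonoGt hhdq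
  have hS0 := hhdq.supHomOn_nonneg q t₀ t
  have hbound := neg_rpow_mul_le_of_forall_gt (hν i).le fun ρ hρ =>
    (hunit i).rescale hmonoGt hhdq hfhom (hφhom i) hΩdil (hS0.trans_lt hρ) q hq t₀ x hx hx₀ t ht
      fun τ hτ => (le_supHomOn hB hτ).trans hρ.le
  rw [Real.mul_rpow (Real.rpow_nonneg (hγC i) _) hS0, ← Real.rpow_mul (hγC i),
    inv_mul_cancel₀ (hν i).ne', Real.rpow_one]
  linarith

/-- necessary condition of ISSf for homogeneous systems: if the system is
Input-to-State Safe on `Ω = {x : φᵢ(x) ≥ 0}`, then there exists `r ≥ 0` such that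
`φᵢ(x(t)) + (rᵢ·‖q‖_{d̃,L∞(t₀,t)})^{νᵢ} ≥ 0` along all solutions starting in `Ω`. -/
theorem stmt13 {n k : ℕ} (p : ℕ)
    (G : Matrix (Fin n) (Fin n) ℝ) (Gt : Matrix (Fin k) (Fin k) ℝ)
    (Nn : (Fin n → ℝ) → ℝ) (Nk : (Fin k → ℝ) → ℝ)
    (hNn : IsNorm Nn) (hNk : IsNorm Nk)
    (hdilG : IsDilation G Nn) (hmonoG : IsMonotoneDil G Nn)
    (hdilGt : IsDilation Gt Nk) (hmonoGt : IsMonotoneDil Gt Nk)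
    (hdq : (Fin k → ℝ) → ℝ) (hhdq : IsCanonHomNorm Gt Nk hdq)
    (f : (Fin n → ℝ) → (Fin k → ℝ) → (Fin n → ℝ)) (μ : ℝ) (hμ : -1 < μ)
    (hf : Continuous fun pr : (Fin n → ℝ) × (Fin k → ℝ) => f pr.1 pr.2)
    (hfhom : ∀ (s : ℝ) (x : Fin n → ℝ) (q : Fin k → ℝ),
      f (dilMat G s *ᵥ x) (dilMat Gt s *ᵥ q) = Real.exp (μ * s) • (dilMat G s *ᵥ f x q))
    (φ : Fin p → (Fin n → ℝ) → ℝ) (ν : Fin p → ℝ) (hν : ∀ i, 0 < ν i)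
    (hφcont : ∀ i, Continuous (φ i))
    (hφC1 : ∀ i, ContDiffOn ℝ 1 (φ i) {x : Fin n → ℝ | x ≠ 0})
    (hφhom : ∀ i, ∀ (s : ℝ) (x : Fin n → ℝ),
      φ i (dilMat G s *ᵥ x) = Real.exp (ν i * s) * φ i x)
    (Ω : Set (Fin n → ℝ)) (hΩ : Ω = {x : Fin n → ℝ | ∀ i, 0 ≤ φ i x})
    -- Assumption 4: forward (local) uniqueness from any `x₀ ∉ int Ω`
    (huniq : ∀ q : ℝ → (Fin k → ℝ), IsBddInput q → ∀ t₀ : ℝ,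
      ∀ x y : ℝ → (Fin n → ℝ),
        (∀ t : ℝ, t₀ ≤ t → HasDerivAt x (f (x t) (q t)) t) →
        (∀ t : ℝ, t₀ ≤ t → HasDerivAt y (f (y t) (q t)) t) →
        x t₀ = y t₀ → x t₀ ∉ interior Ω →
        ∃ ε : ℝ, 0 < ε ∧ ∀ t ∈ Set.Icc t₀ (t₀ + ε), x t = y t)
    -- the system is Input-to-State Safe on Ω
    (hISSf : ∃ γ : Fin p → ℝ → ℝ, (∀ i, IsClassK (γ i)) ∧
      ∀ q : ℝ → (Fin k → ℝ), IsBddInput q → ∀ t₀ : ℝ, ∀ x : ℝ → (Fin n → ℝ),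
        (∀ t : ℝ, t₀ ≤ t → HasDerivAt x (f (x t) (q t)) t) → x t₀ ∈ Ω →
        ∀ t : ℝ, t₀ ≤ t → ∀ i, -(γ i (supEuclOn q t₀ t)) ≤ φ i (x t)) :
    ∃ r : Fin p → ℝ, (∀ i, 0 ≤ r i) ∧
      ∀ q : ℝ → (Fin k → ℝ), IsBddInput q → ∀ t₀ : ℝ, ∀ x : ℝ → (Fin n → ℝ),
        (∀ t : ℝ, t₀ ≤ t → HasDerivAt x (f (x t) (q t)) t) → x t₀ ∈ Ω →
        ∀ t : ℝ, t₀ ≤ t → ∀ i,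
          0 ≤ φ i (x t) + (r i * supHomOn hdq q t₀ t) ^ ν i :=
  stmt13_general p G Gt Nk hNk hdilGt hmonoGt hdq hhdq f μ hfhom φ ν hν hφhom Ω hΩ hISSf
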